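/- arXiv:2408.10772 — 9 statements merged into one kernel-verified Lean document; each statement's English description precedes it below -/
import Mathlib

section
/- Let U be a supertropical monoid and define the equal fate relation F on U by: a F b iff a = b, or a, b ∈ 𝒯(U) and a and b have the same fate. Then: (1) F is an MFCE-relation on U, and no tangible element of U is F-equivalent to a ghost; (2) F is contained in every MFCE-relation F′ on U such that no tangible element is F′-equivalent to a ghost and such that the quotient U/F′ has fate distinction, i.e. such that for all x₁, x₂ ∈ 𝒯(U) with e·x₁ = e·x₂ and (x₁,x₂) ∉ F′ there exists u ∈ 𝒯(U) with x₁·u and x₂·u of different kind (not both tangible, not both nonzero ghosts, not both zero). -/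
/-- A supertropical monoid structure on a commutative monoid `U`: an absorbing
element `zero`, a distinguished idempotent `e` with `e * x = 0 → x = 0`, and a
total order on the ghost ideal `eU = {e * y : y ∈ U}` compatible with
multiplication and with least element `zero`. -/
structure SupertropicalStr (U : Type) [CommMonoid U] where
  zero : U
  e : U
  zero_mul : ∀ x : U, zero * x = zero
  e_idem : e * e = e
  e_mul_eq_zero : ∀ x : U, e * x = zero → x = zero
  le : U → U → Prop
  le_refl : ∀ a : U, (∃ y, a = e * y) → le a a
  le_trans : ∀ a b c : U, (∃ y, a = e * y) → (∃ y, b = e * y) → (∃ y, c = e * y) →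
    le a b → le b c → le a c
  le_antisymm : ∀ a b : U, (∃ y, a = e * y) → (∃ y, b = e * y) → le a b → le b a → a = b
  le_total : ∀ a b : U, (∃ y, a = e * y) → (∃ y, b = e * y) → le a b ∨ le b a
  mul_le_mul : ∀ a b d : U, (∃ y, a = e * y) → (∃ y, b = e * y) → (∃ y, d = e * y) →
    le a b → le (a * d) (b * d)
  zero_le : ∀ a : U, (∃ y, a = e * y) → le zero a

namespace SupertropicalStr

variable {U : Type} [CommMonoid U] (S : SupertropicalStr U)

/-- `x` is a ghost element, i.e. `x ∈ eU`. -/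
def Ghost (x : U) : Prop := ∃ y, x = S.e * y

/-- `x` is tangible, i.e. `x ∈ 𝒯(U) = U ∖ eU`. -/
def Tangible (x : U) : Prop := ¬ S.Ghost x

/-- `a` and `b` are of the same kind: both tangible, both nonzero ghosts, or both zero. -/
def SameKind (a b : U) : Prop :=
  (S.Tangible a ∧ S.Tangible b) ∨
  (S.Ghost a ∧ a ≠ S.zero ∧ S.Ghost b ∧ b ≠ S.zero) ∨
  (a = S.zero ∧ b = S.zero)

/-- Two tangibles have the same fate if they have the same ghost companion and all
products with tangibles are of the same kind. -/
def SameFate (x₁ x₂ : U) : Prop :=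
  S.e * x₁ = S.e * x₂ ∧ ∀ u : U, S.Tangible u → S.SameKind (x₁ * u) (x₂ * u)

/-- `U` has fate distinction: distinct tangibles have different fates. -/
def FateDistinction : Prop :=
  ∀ x₁ x₂ : U, S.Tangible x₁ → S.Tangible x₂ → S.SameFate x₁ x₂ → x₁ = x₂

/-- An MFCE-relation: a multiplicative, fiber conserving equivalence relation. -/
def IsMFCE (E : U → U → Prop) : Prop :=
  Equivalence E ∧ (∀ x y z : U, E x y → E (x * z) (y * z)) ∧
  (∀ x y : U, E x y → S.e * x = S.e * y)

end SupertropicalStr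

namespace SupertropicalStr

variable {U : Type} [CommMonoid U] (S : SupertropicalStr U)

lemma ghost_mul_e {g : U} (hg : S.Ghost g) : S.e * g = g := by
  obtain ⟨y, rfl⟩ := hg
  rw [← mul_assoc, S.e_idem]

lemma sameKind_refl (a : U) : S.SameKind a a := by
  by_cases h : S.Ghost a
  · by_cases hz : a = S.zero
    · exact Or.inr (Or.inr ⟨hz, hz⟩)
    · exact Or.inr (Or.inl ⟨h, hz, h, hz⟩)
  · exact Or.inl ⟨h, h⟩

lemma sameKind_symm {a b : U} (h : S.SameKind a b) : S.SameKind b a := by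
  unfold SameKind at *; tauto

lemma zero_ghost : S.Ghost S.zero := ⟨S.zero, by rw [mul_comm, S.zero_mul]⟩

lemma sameKind_trans {a b c : U} (h1 : S.SameKind a b) (h2 : S.SameKind b c) :
    S.SameKind a c := by
  rcases h1 with ⟨ha, hb⟩ | ⟨ga, na, gb, nb⟩ | ⟨za, zb⟩ <;>
    rcases h2 with ⟨hb', hc⟩ | ⟨gb', nb', gc, nc⟩ | ⟨zb', zc⟩
  · exact Or.inl ⟨ha, hc⟩
  · exact absurd gb' hb
  · exact absurd (zb' ▸ S.zero_ghost) hb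
  · exact absurd gb hb'
  · exact Or.inr (Or.inl ⟨ga, na, gc, nc⟩)
  · exact absurd zb' nb
  · exact absurd (zb ▸ S.zero_ghost) hb'
  · exact absurd zb nb'
  · exact Or.inr (Or.inr ⟨za, zc⟩)

/-- Multiplying by a ghost, elements with same ghost companion give equal products. -/
lemma mul_ghost_eq {x y v : U} (h : S.e * x = S.e * y) (hv : S.Ghost v) :
    x * v = y * v := by
  obtain ⟨w, rfl⟩ := hv
  calc x * (S.e * w) = (S.e * x) * w := by rw [← mul_assoc, mul_comm x S.e]
    _ = (S.e * y) * w := by rw [h]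
    _ = y * (S.e * w) := by rw [mul_comm S.e y, mul_assoc]

lemma sameFate_mul_all {x y : U} (h : S.SameFate x y) (v : U) :
    S.SameKind (x * v) (y * v) := by
  by_cases hv : S.Ghost v
  · rw [S.mul_ghost_eq h.1 hv]; exact S.sameKind_refl _
  · exact h.2 v hv

end SupertropicalStr

/-- The equal fate relation `F` (`a F b` iff `a = b`, or both are tangible with the
same fate) is an MFCE-relation under which no tangible is equivalent to a ghost,
and it is contained in every MFCE-relation `F'` with these two properties whose
quotient has fate distinction. -/
theorem stmt1 {U : Type} [CommMonoid U] (S : SupertropicalStr U)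
    (F : U → U → Prop)
    (hF : ∀ a b : U, F a b ↔ (a = b ∨ (S.Tangible a ∧ S.Tangible b ∧ S.SameFate a b))) :
    (S.IsMFCE F ∧ ∀ x y : U, S.Tangible x → S.Ghost y → ¬ F x y) ∧
    (∀ F' : U → U → Prop, S.IsMFCE F' →
      (∀ x y : U, S.Tangible x → S.Ghost y → ¬ F' x y) →
      (∀ x₁ x₂ : U, S.Tangible x₁ → S.Tangible x₂ → S.e * x₁ = S.e * x₂ → ¬ F' x₁ x₂ →
        ∃ u : U, S.Tangible u ∧ ¬ S.SameKind (x₁ * u) (x₂ * u)) →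
      ∀ a b : U, F a b → F' a b) := by

  have key : ∀ a b z : U, F a b → F (a * z) (b * z) := by
    intro x y z hxy
    rcases (hF x y).1 hxy with rfl | ⟨hx, hy, hfate⟩
    · exact (hF _ _).2 (Or.inl rfl)
    · rcases S.sameFate_mul_all hfate z with ⟨ht1, ht2⟩ | ⟨hg1, hn1, hg2, hn2⟩ | ⟨h1, h2⟩
      · refine (hF _ _).2 (Or.inr ⟨ht1, ht2, ?_, ?_⟩)
        · calc S.e * (x * z) = (S.e * x) * z := (mul_assoc _ _ _).symm
            _ = (S.e * y) * z := by rw [hfate.1]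
            _ = S.e * (y * z) := mul_assoc _ _ _
        · intro u hu
          have := S.sameFate_mul_all hfate (z * u)
          simpa [mul_assoc] using this
      · have : x * z = y * z := by
          calc x * z = S.e * (x * z) := (S.ghost_mul_e hg1).symm
            _ = (S.e * x) * z := (mul_assoc _ _ _).symm
            _ = (S.e * y) * z := by rw [hfate.1]
            _ = S.e * (y * z) := mul_assoc _ _ _
            _ = y * z := S.ghost_mul_e hg2
        exact (hF _ _).2 (Or.inl this)
      · exact (hF _ _).2 (Or.inl (h1.trans h2.symm))
  constructor
  · constructor
    · refine ⟨⟨?_, ?_, ?_⟩, key, ?_⟩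
      · intro a; exact (hF a a).2 (Or.inl rfl)
      · intro a b h
        rcases (hF a b).1 h with rfl | ⟨ha, hb, h1, h2⟩
        · exact (hF _ _).2 (Or.inl rfl)
        · exact (hF _ _).2 (Or.inr ⟨hb, ha, h1.symm,
            fun u hu => S.sameKind_symm (h2 u hu)⟩)
      · intro a b c hab hbc
        rcases (hF a b).1 hab with rfl | ⟨ha, hb, h1, h2⟩
        · exact hbc
        · rcases (hF b c).1 hbc with rfl | ⟨hb', hc, h1', h2'⟩
          · exact hab
          · exact (hF _ _).2 (Or.inr ⟨ha, hc, h1.trans h1',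
              fun u hu => S.sameKind_trans (h2 u hu) (h2' u hu)⟩)
      · intro a b h
        rcases (hF a b).1 h with rfl | ⟨_, _, h1, _⟩
        · rfl
        · exact h1
    · intro x y hx hy h
      rcases (hF x y).1 h with rfl | ⟨_, hy', _⟩
      · exact hx hy
      · exact hy' hy
  · intro F' hF' _ hfd a b hab
    rcases (hF a b).1 hab with rfl | ⟨ha, hb, hfate⟩
    · exact hF'.1.refl a
    · by_contra hne
      obtain ⟨u, hu, hk⟩ := hfd a b ha hb hfate.1 hne
      exact hk (hfate.2 u hu)
end

section
/- Let U be a supertropical monoid whose ghost ideal eU equals M = {cᵏ : k ∈ ℕ} ∪ {0} (with cᵏ·cˡ = c^{k+l}, e = c⁰, all cᵏ distinct, 0 < e < c < c² < ⋯), and assume every element of 𝒯(U) is a (possibly empty) product of elements of 𝒯_c(U) := {x ∈ 𝒯(U) : e·x = c}. Then: (a) 𝒯_c(U) is exactly the set of irreducible elements of U; (b) 𝒯(U) is finite if and only if 𝒯_c(U) is finite and for every x ∈ 𝒯_c(U) there exists d ∈ ℕ with x^d ∈ 𝒯(U) and x^{d+1} ∈ eU; and in that case, writing 𝒯_c(U)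 = {x₁, …, x_m} and letting d_k be minimal with x_k^{d_k+1} ∈ eU, every tangible element is a product ∏ x_k^{α_k} with 0 ≤ α_k ≤ d_k, so |𝒯(U)| ≤ ∏_{k=1}^{m} (d_k + 1). -/
/-!
The ghost map `x ↦ e x` sends every tangible element to some `e cᵏ`, and the exponent `k` is
additive; since the `e cᵏ` are distinct, `k` is a degree. A product of `k` factors from `𝒯_c(U)`
has degree `k`, so the tangibles of degree `0` and `1` are exactly `1` and `𝒯_c(U)`, and these
are precisely the tangibles that cannot split into two tangible factors of positive degree.
For finiteness: the powers of `x ∈ 𝒯_c(U)` have distinct degrees, so finitely many tangibles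
force some power of `x` to be ghost. Conversely, a ghost divides only ghosts, so a tangible
product of elements of `𝒯_c(U)` contains each `x` fewer than `d_x + 1` times.
-/

open Finset

/-- The products `∏ x ∈ s, x ^ α x` with `α x ≤ d x` for all `x ∈ s`. -/
def boundedMonomials {M : Type*} [CommMonoid M] [DecidableEq M] (s : Finset M) (d : M → ℕ) :
    Finset M :=
  (s.pi fun x => range (d x + 1)).image fun f => ∏ x ∈ s.attach, x.1 ^ f x.1 x.2

section boundedMonomials

variable {M : Type*} [CommMonoid M] [DecidableEq M] {s : Finset M} {d : M → ℕ}

theorem prod_pow_mem_boundedMonomials {α : M → ℕ} (hα : ∀ x ∈ s, α x ≤ d x) :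
    ∏ x ∈ s, x ^ α x ∈ boundedMonomials s d := by
  refine mem_image.2
    ⟨fun x _ => α x, mem_pi.2 fun x hx => mem_range.2 (Nat.lt_succ_of_le (hα x hx)), ?_⟩
  exact prod_attach s fun x => x ^ α x

theorem card_boundedMonomials_le : #(boundedMonomials s d) ≤ ∏ x ∈ s, (d x + 1) :=
  card_image_le.trans_eq <| by simp only [card_pi, card_range]

end boundedMonomials

namespace SupertropicalStr

variable {U : Type} [CommMonoid U] (S : SupertropicalStr U)

def IsIrreducible (x : U) : Prop :=
  S.Tangible x ∧ x ≠ 1 ∧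
    ¬ ∃ u v : U, S.Tangible u ∧ S.Tangible v ∧ u ≠ 1 ∧ v ≠ 1 ∧ x = u * v

def TangiblesGeneratedBy (c : U) : Prop :=
  ∀ x : U, S.Tangible x →
    ∃ l : List U, (∀ y ∈ l, S.Tangible y ∧ S.e * y = S.e * c) ∧ x = l.prod

theorem e_mul_mul (x y : U) : S.e * (x * y) = S.e * x * (S.e * y) := by
  rw [mul_mul_mul_comm, S.e_idem]

variable {S}

theorem Ghost.of_dvd {x y : U} (hx : S.Ghost x) (hxy : x ∣ y) : S.Ghost y := by
  obtain ⟨z, rfl⟩ := hx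
  obtain ⟨w, rfl⟩ := hxy
  exact ⟨z * w, mul_assoc ..⟩

theorem Tangible.of_dvd {x y : U} (hy : S.Tangible y) (hxy : x ∣ y) : S.Tangible x :=
  fun hx => hy (hx.of_dvd hxy)

theorem Tangible.one {x : U} (hx : S.Tangible x) : S.Tangible 1 :=
  hx.of_dvd (one_dvd x)

theorem exists_pow_tangible_pow_succ_ghost {x : U} (hx : S.Tangible x)
    (h : ∃ k, S.Ghost (x ^ k)) : ∃ d, S.Tangible (x ^ d) ∧ S.Ghost (x ^ (d + 1)) := by
  classical
  obtain ⟨d, hd⟩ : ∃ d, Nat.find h = d + 1 :=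
    Nat.exists_eq_succ_of_ne_zero fun h0 => hx.one (by simpa [h0] using Nat.find_spec h)
  exact ⟨d, Nat.find_min h (by omega), hd ▸ Nat.find_spec h⟩

theorem count_le_of_tangible_prod [DecidableEq U] {l : List U} {x : U} {n : ℕ}
    (hl : S.Tangible l.prod) (hx : S.Ghost (x ^ (n + 1))) : l.count x ≤ n := by
  by_contra! h
  exact hl (hx.of_dvd (by simpa using (List.replicate_sublist_iff.2 h).prod_dvd_prod))

section Degree

variable {c : U}

theorem e_mul_mul_eq_pow_add {x y : U} {k l : ℕ} (hx : S.e * x = S.e * c ^ k)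
    (hy : S.e * y = S.e * c ^ l) : S.e * (x * y) = S.e * c ^ (k + l) := by
  rw [e_mul_mul, hx, hy, ← e_mul_mul, pow_add]

theorem e_mul_list_prod {l : List U} (hl : ∀ y ∈ l, S.e * y = S.e * c) :
    S.e * l.prod = S.e * c ^ l.length := by
  induction l with
  | nil => simp
  | cons y t ih =>
    simp only [List.forall_mem_cons] at hl
    rw [List.prod_cons, List.length_cons, add_comm]
    exact e_mul_mul_eq_pow_add (by rw [pow_one, hl.1]) (ih hl.2)

theorem e_mul_pow {x : U} (hx : S.e * x = S.e * c) (k : ℕ) : S.e * x ^ k = S.e * c ^ k := by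
  simpa using e_mul_list_prod (l := List.replicate k x) (by simp [hx])

theorem ne_one_of_e_mul_eq_e_mul (hinj : Function.Injective fun k : ℕ => S.e * c ^ k) {x : U}
    (hx : S.e * x = S.e * c) : x ≠ 1 := by
  rintro rfl
  exact zero_ne_one (hinj (by simpa using hx))

theorem pow_injective (hinj : Function.Injective fun k : ℕ => S.e * c ^ k) {x : U}
    (hx : S.e * x = S.e * c) : Function.Injective (x ^ · : ℕ → U) :=
  fun a b h => hinj <| by simp only [← e_mul_pow hx]; exact congrArg (S.e * ·) h

theorem exists_pow_ghost_of_finite (hinj : Function.Injective fun k : ℕ => S.e * c ^ k)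
    (hfin : {x : U | S.Tangible x}.Finite) {x : U}
    (hx : S.e * x = S.e * c) : ∃ k, S.Ghost (x ^ k) := by
  by_contra! h
  exact Set.infinite_of_injective_forall_mem (pow_injective hinj hx) h hfin

theorem exists_e_mul_eq_pow
    (hfact : S.TangiblesGeneratedBy c) {x : U} (hx : S.Tangible x) :
    ∃ k, S.e * x = S.e * c ^ k := by
  obtain ⟨l, hl, rfl⟩ := hfact x hx
  exact ⟨l.length, e_mul_list_prod fun y hy => (hl y hy).2⟩

theorem eq_one_of_e_mul_eq_e (hinj : Function.Injective fun k : ℕ => S.e * c ^ k)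
    (hfact : S.TangiblesGeneratedBy c) {x : U} (hx : S.Tangible x) (he : S.e * x = S.e) :
    x = 1 := by
  obtain ⟨l, hl, rfl⟩ := hfact x hx
  have hlen : l.length = 0 :=
    hinj <| by simpa [he] using (e_mul_list_prod fun y hy => (hl y hy).2).symm
  rw [List.length_eq_zero_iff.1 hlen, List.prod_nil]

theorem isIrreducible_iff (hinj : Function.Injective fun k : ℕ => S.e * c ^ k)
    (hfact : S.TangiblesGeneratedBy c) {x : U} :
    S.IsIrreducible x ↔ S.Tangible x ∧ S.e * x = S.e * c := by
  constructor
  · rintro ⟨hx, hx1, hirr⟩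
    refine ⟨hx, ?_⟩
    obtain ⟨l, hl, rfl⟩ := hfact x hx
    cases l with
    | nil => exact absurd List.prod_nil hx1
    | cons y t =>
      obtain ⟨hy, -⟩ := List.forall_mem_cons.1 hl
      by_cases ht : t.prod = 1
      · rw [List.prod_cons, ht, mul_one]
        exact hy.2
      · exact absurd ⟨y, t.prod, hy.1, hx.of_dvd (dvd_mul_left _ _),
          ne_one_of_e_mul_eq_e_mul hinj hy.2, ht, List.prod_cons⟩ hirr
  · rintro ⟨hx, hxc⟩
    refine ⟨hx, ne_one_of_e_mul_eq_e_mul hinj hxc, ?_⟩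
    rintro ⟨u, v, hu, hv, hu1, hv1, rfl⟩
    obtain ⟨k, hk⟩ := exists_e_mul_eq_pow hfact hu
    obtain ⟨m, hm⟩ := exists_e_mul_eq_pow hfact hv
    have hk0 : k ≠ 0 := fun h => hu1 (eq_one_of_e_mul_eq_e hinj hfact hu (by simpa [h] using hk))
    have hm0 : m ≠ 0 := fun h => hv1 (eq_one_of_e_mul_eq_e hinj hfact hv (by simpa [h] using hm))
    have hdeg : 1 = k + m := hinj <| by
      simpa only [pow_one, ← hxc] using e_mul_mul_eq_pow_add hk hm
    omega

theorem exists_bounded_exponents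
    (hfact : S.TangiblesGeneratedBy c) {Tc : Finset U} {d : U → ℕ}
    (hTc : ∀ x, S.Tangible x → S.e * x = S.e * c → x ∈ Tc)
    (hd : ∀ x ∈ Tc, S.Ghost (x ^ (d x + 1))) {z : U} (hz : S.Tangible z) :
    ∃ α : U → ℕ, (∀ x ∈ Tc, α x ≤ d x) ∧ z = ∏ x ∈ Tc, x ^ α x := by
  classical
  obtain ⟨l, hl, rfl⟩ := hfact z hz
  refine ⟨fun x => l.count x, fun x hx => count_le_of_tangible_prod hz (hd x hx), ?_⟩
  refine prod_list_count_of_subset l Tc fun y hy => ?_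
  obtain ⟨hyt, hyc⟩ := hl y (List.mem_toFinset.1 hy)
  exact hTc y hyt hyc

theorem tangible_subset_boundedMonomials [DecidableEq U]
    (hfact : S.TangiblesGeneratedBy c) {Tc : Finset U} {d : U → ℕ}
    (hTc : ∀ x, S.Tangible x → S.e * x = S.e * c → x ∈ Tc)
    (hd : ∀ x ∈ Tc, S.Ghost (x ^ (d x + 1))) :
    {x : U | S.Tangible x} ⊆ boundedMonomials Tc d := fun z hz => by
  obtain ⟨α, hα, rfl⟩ := exists_bounded_exponents hfact hTc hd hz
  exact prod_pow_mem_boundedMonomials hα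

end Degree

end SupertropicalStr

open SupertropicalStr in
theorem stmt9_general {U : Type} [CommMonoid U] (S : SupertropicalStr U) (c : U)
    (hinj : ∀ k l : ℕ, k ≠ l → S.e * c ^ k ≠ S.e * c ^ l)
    (hfact : ∀ x : U, S.Tangible x →
      ∃ l : List U, (∀ y ∈ l, S.Tangible y ∧ S.e * y = S.e * c) ∧ x = l.prod) :
    (∀ x : U,
      (S.Tangible x ∧ x ≠ 1 ∧
        ¬ ∃ u v : U, S.Tangible u ∧ S.Tangible v ∧ u ≠ 1 ∧ v ≠ 1 ∧ x = u * v)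
      ↔ (S.Tangible x ∧ S.e * x = S.e * c)) ∧
    ({x : U | S.Tangible x}.Finite ↔
      ({x : U | S.Tangible x ∧ S.e * x = S.e * c}.Finite ∧
       ∀ x : U, S.Tangible x → S.e * x = S.e * c →
         ∃ d : ℕ, S.Tangible (x ^ d) ∧ S.Ghost (x ^ (d + 1)))) ∧
    ({x : U | S.Tangible x}.Finite →
      ∀ (Tc : Finset U) (d : U → ℕ),
        (∀ x : U, x ∈ Tc ↔ (S.Tangible x ∧ S.e * x = S.e * c)) →
        (∀ x ∈ Tc, S.Tangible (x ^ d x) ∧ S.Ghost (x ^ (d x + 1))) →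
        (∀ z : U, S.Tangible z →
          ∃ α : U → ℕ, (∀ x ∈ Tc, α x ≤ d x) ∧ z = ∏ x ∈ Tc, x ^ α x) ∧
        {x : U | S.Tangible x}.ncard ≤ ∏ x ∈ Tc, (d x + 1)) := by
  classical
  have hinj' : Function.Injective fun k : ℕ => S.e * c ^ k :=
    fun k l h => by_contra fun hkl => hinj k l hkl h
  refine ⟨fun x => isIrreducible_iff hinj' hfact, ⟨fun hfin => ⟨?_, ?_⟩, ?_⟩, ?_⟩
  · exact hfin.subset fun x hx => hx.1
  · exact fun x hx hxc =>
      exists_pow_tangible_pow_succ_ghost hx (exists_pow_ghost_of_finite hinj' hfin hxc)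
  · rintro ⟨hTcfin, hpow⟩
    choose! d hd using hpow
    refine (finite_toSet _).subset (tangible_subset_boundedMonomials hfact (d := d)
      (fun x hx hxc => hTcfin.mem_toFinset.2 ⟨hx, hxc⟩) fun x hx => ?_)
    obtain ⟨hxt, hxc⟩ := hTcfin.mem_toFinset.1 hx
    exact (hd x hxt hxc).2
  · intro _ Tc d hTc hd
    have hTc' (x : U) (hx : S.Tangible x) (hxc : S.e * x = S.e * c) : x ∈ Tc :=
      (hTc x).2 ⟨hx, hxc⟩
    have hd' (x : U) (hx : x ∈ Tc) : S.Ghost (x ^ (d x + 1)) := (hd x hx).2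
    refine ⟨fun z hz => exists_bounded_exponents hfact hTc' hd' hz, ?_⟩
    calc {x : U | S.Tangible x}.ncard ≤ #(boundedMonomials Tc d) := by
          rw [← Set.ncard_coe_finset]
          exact Set.ncard_le_ncard (tangible_subset_boundedMonomials hfact hTc' hd')
            (finite_toSet _)
      _ ≤ ∏ x ∈ Tc, (d x + 1) := card_boundedMonomials_le

/-- If the ghost ideal of `U` is `M = {e, c, c², …} ∪ {0}` and every tangible is a
product of elements of `𝒯_c(U)`, then: (a) `𝒯_c(U)` is exactly the set of
irreducibles; (b) `𝒯(U)` is finite iff `𝒯_c(U)` is finite and each `x ∈ 𝒯_c(U)`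
has a power `x^d` tangible with `x^(d+1)` ghost; and in that case every tangible
is `∏ x^(α x)` with `α x ≤ d x`, so `|𝒯(U)| ≤ ∏ (d x + 1)`. -/
theorem stmt9 {U : Type} [CommMonoid U] (S : SupertropicalStr U) (c : U)
    (hM : ∀ x : U, S.Ghost x ↔ (x = S.zero ∨ ∃ k : ℕ, x = S.e * c ^ k))
    (hinj : ∀ k l : ℕ, k ≠ l → S.e * c ^ k ≠ S.e * c ^ l)
    (hne : ∀ k : ℕ, S.e * c ^ k ≠ S.zero)
    (hlt : ∀ k l : ℕ, k < l → S.le (S.e * c ^ k) (S.e * c ^ l))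
    (hfact : ∀ x : U, S.Tangible x →
      ∃ l : List U, (∀ y ∈ l, S.Tangible y ∧ S.e * y = S.e * c) ∧ x = l.prod) :
    (∀ x : U,
      (S.Tangible x ∧ x ≠ 1 ∧
        ¬ ∃ u v : U, S.Tangible u ∧ S.Tangible v ∧ u ≠ 1 ∧ v ≠ 1 ∧ x = u * v)
      ↔ (S.Tangible x ∧ S.e * x = S.e * c)) ∧
    ({x : U | S.Tangible x}.Finite ↔
      ({x : U | S.Tangible x ∧ S.e * x = S.e * c}.Finite ∧
       ∀ x : U, S.Tangible x → S.e * x = S.e * c →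
         ∃ d : ℕ, S.Tangible (x ^ d) ∧ S.Ghost (x ^ (d + 1)))) ∧
    ({x : U | S.Tangible x}.Finite →
      ∀ (Tc : Finset U) (d : U → ℕ),
        (∀ x : U, x ∈ Tc ↔ (S.Tangible x ∧ S.e * x = S.e * c)) →
        (∀ x ∈ Tc, S.Tangible (x ^ d x) ∧ S.Ghost (x ^ (d x + 1))) →
        (∀ z : U, S.Tangible z →
          ∃ α : U → ℕ, (∀ x ∈ Tc, α x ≤ d x) ∧ z = ∏ x ∈ Tc, x ^ α x) ∧
        {x : U | S.Tangible x}.ncard ≤ ∏ x ∈ Tc, (d x + 1)) :=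
  stmt9_general S c hinj hfact
end

section
/- Let U be a supertropical monoid whose ghost ideal eU equals M = {cᵏ : k ∈ ℕ} ∪ {0} (with cᵏ·cˡ = c^{k+l}, e = c⁰, all cᵏ distinct, 0 < e < c < c² < ⋯). Then: (1) U has no zero divisors, i.e. x·y = 0 implies x = 0 or y = 0; (2) if moreover the only tangible element x with e·x = e is 1, then every tangible element of U is isolated: for all x, u ∈ 𝒯(U), if x·u ∈ 𝒯(U) and e·(x·u) = e·x, then x·u = x. -/
/-- If the ghost ideal of `U` is `M = {e, c, c², …} ∪ {0}` then `U` has no zero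
divisors, and if moreover `1` is the only tangible with ghost companion `e`, then
every tangible element of `U` is isolated. -/
theorem stmt10 {U : Type} [CommMonoid U] (S : SupertropicalStr U) (c : U)
    (hM : ∀ x : U, S.Ghost x ↔ (x = S.zero ∨ ∃ k : ℕ, x = S.e * c ^ k))
    (hinj : ∀ k l : ℕ, k ≠ l → S.e * c ^ k ≠ S.e * c ^ l)
    (hne : ∀ k : ℕ, S.e * c ^ k ≠ S.zero)
    (hlt : ∀ k l : ℕ, k < l → S.le (S.e * c ^ k) (S.e * c ^ l)) :
    (∀ x y : U, x * y = S.zero → x = S.zero ∨ y = S.zero) ∧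
    ((∀ x : U, S.Tangible x → S.e * x = S.e → x = 1) →
      ∀ x u : U, S.Tangible x → S.Tangible u → S.Tangible (x * u) →
        S.e * (x * u) = S.e * x → x * u = x) := by
  have hmul : ∀ k l : ℕ, (S.e * c ^ k) * (S.e * c ^ l) = S.e * c ^ (k + l) := by
    intro k l
    rw [mul_mul_mul_comm, S.e_idem, ← pow_add]
  have hsplit : ∀ x : U, x ≠ S.zero → ∃ k : ℕ, S.e * x = S.e * c ^ k := by
    intro x hx
    rcases (hM (S.e * x)).1 ⟨x, rfl⟩ with h0 | hk
    · exact absurd (S.e_mul_eq_zero x h0) hx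
    · exact hk
  have hzg : S.Ghost S.zero := ⟨S.zero, by rw [mul_comm, S.zero_mul]⟩
  have hexy : ∀ x y : U, S.e * (x * y) = (S.e * x) * (S.e * y) := by
    intro x y
    rw [mul_mul_mul_comm, S.e_idem]
  constructor
  · intro x y hxy
    by_contra h
    push_neg at h
    obtain ⟨k, hk⟩ := hsplit x h.1
    obtain ⟨l, hl⟩ := hsplit y h.2
    apply hne (k + l)
    rw [← hmul, ← hk, ← hl, ← hexy, hxy, mul_comm, S.zero_mul]
  · intro hone x u hx hu hxu hex
    have hx0 : x ≠ S.zero := fun h => hx (h ▸ hzg)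
    have hu0 : u ≠ S.zero := fun h => hu (h ▸ hzg)
    obtain ⟨k, hk⟩ := hsplit x hx0
    obtain ⟨l, hl⟩ := hsplit u hu0
    have hkl : S.e * c ^ k = S.e * c ^ (k + l) := by
      rw [← hmul, ← hk, ← hl, ← hexy, hex, hk]
    have hl0 : l = 0 := by
      by_contra hl0
      exact hinj k (k + l) (by omega) hkl
    have hue : S.e * u = S.e := by rw [hl, hl0, pow_zero, mul_one]
    rw [hone u hu hue, mul_one]
end

section
/- Let E_U be an MFCE-relation on 𝔄 = 𝔄(I), and define Ẽ_U on 𝔄 by: a Ẽ_U b iff a = b, or (a E_U b and the E_U-class of a contains a ghost). Then: (1) Ẽ_U is an MFCE-relation on 𝔄 with Ẽ_U ⊆ E_U; (2) every Ẽ_U-class containing no ghost is a singleton, i.e. 𝔄/Ẽ_U has unique tangible factorization; (3) every MFCE-relation E on 𝔄 with E ⊆ E_U all of whose ghost-free classes are singletons satisfies E ⊆ Ẽ_U (so Ũ := 𝔄/Ẽ_U is the unique minimal cover of U = 𝔄/E_U with unique factorization); (4) every E_U-class containing no ghost is a singleton if and only if Ẽ_U = E_U. -/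
/-- The supertropical monoid `𝔄(I)` over `M = {cᵏ : k ∈ ℕ} ∪ {0}`: its tangible
elements are the monomials in commuting variables `(x_i)_{i ∈ I}`, identified with
finitely supported exponent vectors `I →₀ ℕ`; its ghosts are `gh k = cᵏ` and
`zero`. -/
inductive STA (I : Type) : Type where
  | tang : (I →₀ ℕ) → STA I
  | gh : ℕ → STA I
  | zero : STA I

namespace STA

variable {I : Type}

/-- The degree of a monomial. -/
def deg (z : I →₀ ℕ) : ℕ := z.sum fun _ n => n

/-- Multiplication in `𝔄(I)`: monomials multiply among themselves,
`cᵏ · z = c^(k + deg z)`, ghosts multiply in `M`, and `0` is absorbing. -/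
noncomputable def mul : STA I → STA I → STA I
  | zero, _ => zero
  | _, zero => zero
  | tang z, tang w => tang (z + w)
  | tang z, gh k => gh (deg z + k)
  | gh k, tang w => gh (k + deg w)
  | gh k, gh l => gh (k + l)

/-- The ghost elements of `𝔄(I)` (the elements of `M`). -/
def isGhost : STA I → Prop
  | tang _ => False
  | gh _ => True
  | zero => True

/-- The ghost map `a ↦ e·a` (`e = gh 0 = c⁰`). -/
noncomputable def nu : STA I → STA I := fun a => mul (gh 0) a

/-- A relation is multiplicative. -/
def Mult (E : STA I → STA I → Prop) : Prop :=
  ∀ a b d : STA I, E a b → E (mul a d) (mul b d)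

/-- An MFCE-relation on `𝔄(I)`: a multiplicative, fiber conserving equivalence
relation. -/
def MFCE (E : STA I → STA I → Prop) : Prop :=
  Equivalence E ∧ Mult E ∧ ∀ a b : STA I, E a b → nu a = nu b

/-- The smallest multiplicative equivalence relation containing `R`; for `R`
relating the elements of a set `S` (of equal ghost value) this is `Eq(S)`, and
applied to unions it yields joins `⋁` in the lattice of MFCE-relations. -/
def mgen (R : STA I → STA I → Prop) : STA I → STA I → Prop :=
  fun a b => ∀ E : STA I → STA I → Prop,
    Equivalence E → Mult E → (∀ x y : STA I, R x y → E x y) → E a b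

/-- The `E`-class of `a` contains no ghost (i.e. is a tangible class). -/
def GhostFree (E : STA I → STA I → Prop) (a : STA I) : Prop :=
  ¬ ∃ g : STA I, isGhost g ∧ E a g

/-- The relation `Ẽ_U`: `a Ẽ_U b` iff `a = b`, or `a E_U b` and the `E_U`-class of
`a` contains a ghost. -/
def tilde (EU : STA I → STA I → Prop) : STA I → STA I → Prop :=
  fun a b => a = b ∨ (EU a b ∧ ¬ GhostFree EU a)

end STA

lemma STA.isGhost_mul {I : Type} {g : STA I} (d : STA I) (hg : STA.isGhost g) :
    STA.isGhost (STA.mul g d) := by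
  cases g <;> cases d <;> simp_all [STA.mul, STA.isGhost]

/-- For an MFCE-relation `E_U` on `𝔄 = 𝔄(I)`: (1) `Ẽ_U` is an MFCE-relation
contained in `E_U`; (2) every ghost-free `Ẽ_U`-class is a singleton (so `𝔄/Ẽ_U`
has unique tangible factorization); (3) every MFCE-relation `E ⊆ E_U` all of whose
ghost-free classes are singletons satisfies `E ⊆ Ẽ_U`; (4) every ghost-free
`E_U`-class is a singleton iff `Ẽ_U = E_U`. -/
theorem stmt11 {I : Type} (EU : STA I → STA I → Prop) (hEU : STA.MFCE EU) :
    (STA.MFCE (STA.tilde EU) ∧ ∀ a b : STA I, STA.tilde EU a b → EU a b) ∧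
    (∀ a : STA I, STA.GhostFree (STA.tilde EU) a → ∀ b : STA I, STA.tilde EU a b → a = b) ∧
    (∀ E : STA I → STA I → Prop, STA.MFCE E → (∀ a b : STA I, E a b → EU a b) →
      (∀ a : STA I, STA.GhostFree E a → ∀ b : STA I, E a b → a = b) →
      ∀ a b : STA I, E a b → STA.tilde EU a b) ∧
    ((∀ a : STA I, STA.GhostFree EU a → ∀ b : STA I, EU a b → a = b) ↔
      STA.tilde EU = EU) := by

  obtain ⟨hequiv, hmult, hfc⟩ := hEU
  have htsub : ∀ a b : STA I, STA.tilde EU a b → EU a b := by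
    rintro a b (rfl | ⟨h, _⟩)
    · exact hequiv.refl a
    · exact h
  have hclass : ∀ a b : STA I, EU a b → (STA.GhostFree EU a ↔ STA.GhostFree EU b) := by
    intro a b hab
    constructor <;> intro h ⟨g, hg, hbg⟩ <;> exact h ⟨g, hg,
      by first | exact hequiv.trans hab hbg | exact hequiv.trans (hequiv.symm hab) hbg⟩
  have htmfce : STA.MFCE (STA.tilde EU) := by
    refine ⟨⟨fun a => Or.inl rfl, ?_, ?_⟩, ?_, ?_⟩
    · rintro a b (rfl | ⟨h, hng⟩)
      · exact Or.inl rfl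
      · exact Or.inr ⟨hequiv.symm h, fun hb => hng (((hclass a b h).symm.mp hb))⟩
    · rintro a b c (rfl | ⟨h, hng⟩) hbc
      · exact hbc
      · rcases hbc with rfl | ⟨h', _⟩
        · exact Or.inr ⟨h, hng⟩
        · exact Or.inr ⟨hequiv.trans h h', hng⟩
    · rintro a b d (rfl | ⟨h, hng⟩)
      · exact Or.inl rfl
      · refine Or.inr ⟨hmult a b d h, fun hnf => ?_⟩
        simp only [STA.GhostFree, not_not] at hng
        obtain ⟨g, hg, hag⟩ := hng
        exact hnf ⟨STA.mul g d, STA.isGhost_mul d hg, hmult a g d hag⟩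
    · intro a b hab
      exact hfc a b (htsub a b hab)
  refine ⟨⟨htmfce, htsub⟩, ?_, ?_, ?_⟩
  · rintro a hgf b (rfl | ⟨hab, hng⟩)
    · rfl
    · exfalso
      by_contra _
      apply hng
      intro ⟨g, hg, hag⟩
      exact hgf ⟨g, hg, Or.inr ⟨hag, fun h => h ⟨g, hg, hag⟩⟩⟩
  · intro E hE hsub hsing a b hab
    by_cases hab' : a = b
    · exact Or.inl hab'
    · refine Or.inr ⟨hsub a b hab, fun hgf => ?_⟩
      have : ¬ STA.GhostFree E a := fun hgfE => hab' (hsing a hgfE b hab)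
      apply this
      intro ⟨g, hg, hag⟩
      exact hgf ⟨g, hg, hsub a g hag⟩
  · constructor
    · intro hsing
      funext a b
      apply propext
      constructor
      · exact htsub a b
      · intro hab
        by_cases hgf : STA.GhostFree EU a
        · exact Or.inl (hsing a hgf b hab)
        · exact Or.inr ⟨hab, hgf⟩
    · intro heq a hgf b hab
      rw [← heq] at hab
      rcases hab with rfl | ⟨_, hng⟩
      · rfl
      · exact absurd hgf hng
end

section
/- Let E_U be an MFCE-relation on 𝔄 = 𝔄(I), let ζ be an E_U-class containing no ghost, and let S₀ be the set of monomials in ζ. For an MFCE-relation E ⊆ E_U on 𝔄, set σ(E) := {z ∈ S₀ : the E-class of z is the singleton {z}}. Let S ⊆ S₀ be such that σ(E) = S for at least one MFCE-relation E ⊆ E_U. Then: (a) there is a greatest MFCE-relation E_S ⊆ E_U with σ(E_S) = S, namely the join of all MFCE-relations E ⊆ E_U with σ(E) = S; (b) E_S is also the greatest MFCE-relation E ⊆ E_U with S ⊆ σ(E). (In the language of covers: W_S := 𝔄/E_S is the unique minimal cover of U = 𝔄/E_U cutting out S in π_U^{-1}(ζ), and the unique minimal cover of U containing S.) -/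
namespace STA

variable {I : Type}

lemma deg_add (z w : I →₀ ℕ) : deg (z + w) = deg z + deg w := by
  classical
  simpa [deg] using Finsupp.sum_add_index' (f := z) (g := w)
    (h := fun (_ : I) (n : ℕ) => n) (fun _ => rfl) (fun _ _ _ => rfl)

lemma nu_mul (a d : STA I) : nu (mul a d) = mul (nu a) d := by
  cases a <;> cases d <;> simp [nu, mul, deg_add] <;> omega

/-- `mgen R` is reflexive. -/
lemma mgen_refl (R : STA I → STA I → Prop) (a : STA I) : mgen R a a :=
  fun _ h1 _ _ => h1.refl a

lemma mgen_symm {R : STA I → STA I → Prop} {a b : STA I} (h : mgen R a b) :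
    mgen R b a := fun E h1 h2 h3 => h1.symm (h E h1 h2 h3)

lemma mgen_trans {R : STA I → STA I → Prop} {a b c : STA I}
    (h : mgen R a b) (h' : mgen R b c) : mgen R a c :=
  fun E h1 h2 h3 => h1.trans (h E h1 h2 h3) (h' E h1 h2 h3)

lemma mgen_mult (R : STA I → STA I → Prop) : Mult (mgen R) :=
  fun a b d h E h1 h2 h3 => h2 a b d (h E h1 h2 h3)

lemma mgen_of {R : STA I → STA I → Prop} {a b : STA I} (h : R a b) :
    mgen R a b := fun _ _ _ h3 => h3 _ _ h

/-- Key auxiliary lemma: if `R` is symmetric, multiplicative, fiber conserving,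
contained in `EU`, and every element of `Sset` is `R`-related only to itself,
then `mgen R` is an MFCE-relation contained in `EU` for which every element of
`Sset` has singleton class. -/
lemma mgen_aux {EU : STA I → STA I → Prop} (hEU : MFCE EU)
    (Sset : Set (STA I)) (R : STA I → STA I → Prop)
    (hsym : ∀ a b, R a b → R b a)
    (hmult : ∀ a b d, R a b → R (mul a d) (mul b d))
    (hnu : ∀ a b, R a b → nu a = nu b)
    (hsub : ∀ a b, R a b → EU a b)
    (hfix : ∀ z ∈ Sset, ∀ b, R z b → b = z) :
    MFCE (mgen R) ∧ (∀ a b, mgen R a b → EU a b) ∧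
      (∀ z ∈ Sset, ∀ b, mgen R z b → b = z) := by
  refine ⟨⟨⟨mgen_refl R, mgen_symm, mgen_trans⟩, mgen_mult R, ?_⟩, ?_, ?_⟩
  · -- fiber conserving
    intro a b h
    exact h (fun x y => nu x = nu y) ⟨fun _ => rfl, Eq.symm, Eq.trans⟩
      (fun x y d hxy => by
        have h' : nu x = nu y := hxy
        show nu (mul x d) = nu (mul y d)
        rw [nu_mul, nu_mul, h']) hnu
  · intro a b h
    exact h EU hEU.1 hEU.2.1 hsub
  · -- singleton classes on Sset, via the reflexive transitive closure
    have hT : ∀ a b, mgen R a b → Relation.ReflTransGen R a b := by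
      intro a b h
      refine h _ ⟨fun _ => Relation.ReflTransGen.refl, ?_, fun h1 h2 => h1.trans h2⟩
        ?_ (fun x y hxy => Relation.ReflTransGen.single hxy)
      · -- symm
        intro x y hxy
        induction hxy with
        | refl => exact Relation.ReflTransGen.refl
        | tail _ hcb ih =>
            exact (Relation.ReflTransGen.single (hsym _ _ hcb)).trans ih
      · -- mult
        intro x y d hxy
        induction hxy with
        | refl => exact Relation.ReflTransGen.refl
        | tail _ hcb ih => exact ih.tail (hmult _ _ d hcb)
    intro z hz b h
    have h' := hT z b h
    clear h
    induction h' with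
    | refl => rfl
    | tail _ hcb ih => rw [ih] at hcb; exact hfix z hz _ hcb

end STA

/-- Let `E_U` be an MFCE-relation on `𝔄(I)`, `ζ` a ghost-free `E_U`-class (of `z₀`),
`S₀` its set of monomials, and `σ(E)` the set of `z ∈ S₀` whose `E`-class is the
singleton `{z}`.  If `S ⊆ S₀` is realized as `σ(E)` for some MFCE-relation
`E ⊆ E_U`, then there is a greatest such relation `E_S` — namely the join of all
of them — and `E_S` is also the greatest MFCE-relation `E ⊆ E_U` with `S ⊆ σ(E)`.
(So `W_S = 𝔄/E_S` is the unique minimal cover of `U` cutting out `S` in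
`π_U⁻¹(ζ)`, and the unique minimal cover of `U` containing `S`.) -/
theorem stmt12 {I : Type} (EU : STA I → STA I → Prop) (hEU : STA.MFCE EU)
    (z₀ : STA I) (hz₀ : STA.GhostFree EU z₀)
    (S₀ : Set (STA I)) (hS₀ : S₀ = {a : STA I | EU a z₀})
    (σ : (STA I → STA I → Prop) → Set (STA I))
    (hσ : ∀ E : STA I → STA I → Prop, σ E = {z ∈ S₀ | ∀ b : STA I, E z b → b = z})
    (S : Set (STA I)) (hS : S ⊆ S₀)
    (hex : ∃ E : STA I → STA I → Prop,
      STA.MFCE E ∧ (∀ a b : STA I, E a b → EU a b) ∧ σ E = S) :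
    ∃ ES : STA I → STA I → Prop,
      STA.MFCE ES ∧ (∀ a b : STA I, ES a b → EU a b) ∧ σ ES = S ∧
      (∀ E : STA I → STA I → Prop, STA.MFCE E → (∀ a b : STA I, E a b → EU a b) →
        σ E = S → ∀ a b : STA I, E a b → ES a b) ∧
      (∀ E : STA I → STA I → Prop, STA.MFCE E → (∀ a b : STA I, E a b → EU a b) →
        S ⊆ σ E → ∀ a b : STA I, E a b → ES a b) ∧
      ES = STA.mgen (fun a b : STA I => ∃ E : STA I → STA I → Prop,
        STA.MFCE E ∧ (∀ x y : STA I, E x y → EU x y) ∧ σ E = S ∧ E a b) := by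
  classical
  obtain ⟨E₀, hE₀m, hE₀sub, hE₀σ⟩ := hex
  set R : STA I → STA I → Prop := fun a b => ∃ E : STA I → STA I → Prop,
      STA.MFCE E ∧ (∀ x y : STA I, E x y → EU x y) ∧ σ E = S ∧ E a b with hRdef
  have hRsym : ∀ a b, R a b → R b a := by
    rintro a b ⟨E, h1, h2, h3, h4⟩; exact ⟨E, h1, h2, h3, h1.1.symm h4⟩
  have hRmult : ∀ a b d, R a b → R (STA.mul a d) (STA.mul b d) := by
    rintro a b d ⟨E, h1, h2, h3, h4⟩; exact ⟨E, h1, h2, h3, h1.2.1 a b d h4⟩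
  have hRnu : ∀ a b, R a b → STA.nu a = STA.nu b := by
    rintro a b ⟨E, h1, h2, h3, h4⟩; exact h1.2.2 a b h4
  have hRsub : ∀ a b, R a b → EU a b := by
    rintro a b ⟨E, h1, h2, h3, h4⟩; exact h2 a b h4
  have hRfix : ∀ z ∈ S, ∀ b, R z b → b = z := by
    rintro z hz b ⟨E, h1, h2, h3, h4⟩
    have hzσ : z ∈ σ E := h3 ▸ hz
    rw [hσ] at hzσ
    exact hzσ.2 b h4
  obtain ⟨hM, hsub, hfix⟩ := STA.mgen_aux hEU S R hRsym hRmult hRnu hRsub hRfix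
  -- A general computation of `σ` of `mgen R'` for any `R'` containing `R`
  -- with singleton classes along `S`.
  have hσgen : ∀ R' : STA I → STA I → Prop, (∀ a b, R a b → R' a b) →
      (∀ z ∈ S, ∀ b, STA.mgen R' z b → b = z) → σ (STA.mgen R') = S := by
    intro R' hRR' hfix'
    rw [hσ]
    ext z
    simp only [Set.mem_setOf_eq, Set.mem_sep_iff]
    constructor
    · rintro ⟨hz0, hsing⟩
      by_contra hzS
      have hznσ : z ∉ σ E₀ := hE₀σ ▸ hzS
      rw [hσ] at hznσ
      simp only [Set.mem_setOf_eq, Set.mem_sep_iff, not_and, not_forall] at hznσ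
      obtain ⟨b, hb, hbz⟩ := hznσ hz0
      exact hbz (hsing b (STA.mgen_of (hRR' _ _ ⟨E₀, hE₀m, hE₀sub, hE₀σ, hb⟩)))
    · intro hz
      exact ⟨hS hz, fun b hb => hfix' z hz b hb⟩
  have hσES : σ (STA.mgen R) = S := hσgen R (fun _ _ h => h) hfix
  refine ⟨STA.mgen R, hM, hsub, hσES, ?_, ?_, rfl⟩
  · intro E h1 h2 h3 a b hab
    exact STA.mgen_of ⟨E, h1, h2, h3, hab⟩
  · -- greatest among `E ⊆ E_U` with `S ⊆ σ E`
    intro E h1 h2 hSσ a b hab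
    set R₂ : STA I → STA I → Prop := fun a b => R a b ∨ E a b with hR₂def
    have h₂sym : ∀ a b, R₂ a b → R₂ b a := by
      rintro a b (h | h)
      · exact Or.inl (hRsym a b h)
      · exact Or.inr (h1.1.symm h)
    have h₂mult : ∀ a b d, R₂ a b → R₂ (STA.mul a d) (STA.mul b d) := by
      rintro a b d (h | h)
      · exact Or.inl (hRmult a b d h)
      · exact Or.inr (h1.2.1 a b d h)
    have h₂nu : ∀ a b, R₂ a b → STA.nu a = STA.nu b := by
      rintro a b (h | h)
      · exact hRnu a b h
      · exact h1.2.2 a b h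
    have h₂sub : ∀ a b, R₂ a b → EU a b := by
      rintro a b (h | h)
      · exact hRsub a b h
      · exact h2 a b h
    have h₂fix : ∀ z ∈ S, ∀ b, R₂ z b → b = z := by
      rintro z hz b (h | h)
      · exact hRfix z hz b h
      · have hzσ : z ∈ σ E := hSσ hz
        rw [hσ] at hzσ
        exact hzσ.2 b h
    obtain ⟨hM₂, hsub₂, hfix₂⟩ := STA.mgen_aux hEU S R₂ h₂sym h₂mult h₂nu h₂sub h₂fix
    have hσ₂ : σ (STA.mgen R₂) = S := hσgen R₂ (fun a b h => Or.inl h) hfix₂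
    -- `mgen R₂` belongs to the family defining `R`, so it is contained in `mgen R`.
    have hE₂ : STA.mgen R₂ a b := STA.mgen_of (Or.inr hab)
    exact STA.mgen_of ⟨STA.mgen R₂, hM₂, hsub₂, hσ₂, hE₂⟩
end

section
/- Let E_U be an MFCE-relation on 𝔄 = 𝔄(I), define Ẽ_U by a Ẽ_U b iff a = b or (a E_U b and the E_U-class of a contains a ghost), let ζ be an E_U-class containing no ghost with S₀ the set of monomials in ζ, and for an MFCE-relation E ⊆ E_U set σ(E) := {z ∈ S₀ : the E-class of z is {z}}. For every S ⊆ S₀ that equals σ(E) for some MFCE-relation E ⊆ E_U, the greatest such relation E_S (which exists) satisfies Ẽ_U ⊆ E_S; that is, every minimal partial splitting cover W_S = 𝔄/E_S of U = 𝔄/E_U for ζ is a subcover of the minimal unique-factorization cover Ũ = 𝔄/Ẽ_U. -/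
namespace STA

variable {I : Type}

lemma mul_ghost {g : STA I} (d : STA I) (hg : isGhost g) : isGhost (mul g d) := by
  cases g <;> cases d <;> simp [isGhost, mul] at *

lemma ghostFree_congr {EU : STA I → STA I → Prop} (hEU : MFCE EU) {a b : STA I}
    (hab : EU a b) : GhostFree EU a ↔ GhostFree EU b := by
  unfold GhostFree
  constructor
  · rintro h ⟨g, hg, hbg⟩; exact h ⟨g, hg, hEU.1.trans hab hbg⟩
  · rintro h ⟨g, hg, hag⟩; exact h ⟨g, hg, hEU.1.trans (hEU.1.symm hab) hag⟩

lemma tilde_mfce {EU : STA I → STA I → Prop} (hEU : MFCE EU) : MFCE (tilde EU) := by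
  refine ⟨⟨fun a => Or.inl rfl, ?_, ?_⟩, ?_, ?_⟩
  · rintro a b (rfl | ⟨h, hg⟩)
    · exact Or.inl rfl
    · exact Or.inr ⟨hEU.1.symm h, fun hf => hg ((ghostFree_congr hEU h).mpr hf)⟩
  · rintro a b c (rfl | ⟨h1, hg1⟩) h2
    · exact h2
    · rcases h2 with rfl | ⟨h2, _⟩
      · exact Or.inr ⟨h1, hg1⟩
      · exact Or.inr ⟨hEU.1.trans h1 h2, hg1⟩
  · rintro a b d (rfl | ⟨h, hg⟩)
    · exact Or.inl rfl
    · obtain ⟨g, hgg, hag⟩ := not_not.mp hg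
      exact Or.inr ⟨hEU.2.1 a b d h,
        fun hf => hf ⟨mul g d, mul_ghost d hgg, hEU.2.1 a g d hag⟩⟩
  · rintro a b (rfl | ⟨h, _⟩)
    · rfl
    · exact hEU.2.2 a b h

lemma transGen_mfce {R : STA I → STA I → Prop}
    (hrefl : ∀ a, R a a) (hsymm : ∀ a b, R a b → R b a)
    (hmult : Mult R) (hnu : ∀ a b, R a b → nu a = nu b) :
    MFCE (Relation.TransGen R) := by
  refine ⟨⟨fun a => .single (hrefl a), ?_, fun h1 h2 => h1.trans h2⟩, ?_, ?_⟩
  · intro a b h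
    induction h with
    | single h => exact .single (hsymm _ _ h)
    | tail _ hbc ih => exact .head (hsymm _ _ hbc) ih
  · intro a b d h
    induction h with
    | single h => exact .single (hmult _ _ d h)
    | tail _ hbc ih => exact ih.tail (hmult _ _ d hbc)
  · intro a b h
    induction h with
    | single h => exact hnu _ _ h
    | tail _ hbc ih => exact ih.trans (hnu _ _ hbc)

lemma transGen_singleton {R : STA I → STA I → Prop} {z : STA I}
    (hz : ∀ b, R z b → b = z) : ∀ b, Relation.TransGen R z b → b = z := by
  intro b h
  induction h with
  | single h => exact hz _ h
  | tail _ hbc ih => subst ih; exact hz _ hbc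

end STA

/-- With `E_U`, a ghost-free class `ζ` with monomial set `S₀`, and `σ` as in the
partial-splitting setup: for every `S ⊆ S₀` realized as `σ(E)` for some
MFCE-relation `E ⊆ E_U`, the greatest such relation `E_S` exists and contains
`Ẽ_U`; i.e. every minimal partial splitting cover `W_S = 𝔄/E_S` of `U` is a
subcover of the minimal unique-factorization cover `Ũ = 𝔄/Ẽ_U`. -/
theorem stmt13 {I : Type} (EU : STA I → STA I → Prop) (hEU : STA.MFCE EU)
    (z₀ : STA I) (hz₀ : STA.GhostFree EU z₀)
    (S₀ : Set (STA I)) (hS₀ : S₀ = {a : STA I | EU a z₀})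
    (σ : (STA I → STA I → Prop) → Set (STA I))
    (hσ : ∀ E : STA I → STA I → Prop, σ E = {z ∈ S₀ | ∀ b : STA I, E z b → b = z}) :
    ∀ S : Set (STA I), S ⊆ S₀ →
      (∃ E : STA I → STA I → Prop,
        STA.MFCE E ∧ (∀ a b : STA I, E a b → EU a b) ∧ σ E = S) →
      (∃ ES : STA I → STA I → Prop,
        STA.MFCE ES ∧ (∀ a b : STA I, ES a b → EU a b) ∧ σ ES = S ∧
        ∀ E : STA I → STA I → Prop, STA.MFCE E → (∀ a b : STA I, E a b → EU a b) →
          σ E = S → ∀ a b : STA I, E a b → ES a b) ∧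
      ∀ ES : STA I → STA I → Prop,
        (STA.MFCE ES ∧ (∀ a b : STA I, ES a b → EU a b) ∧ σ ES = S ∧
          ∀ E : STA I → STA I → Prop, STA.MFCE E → (∀ a b : STA I, E a b → EU a b) →
            σ E = S → ∀ a b : STA I, E a b → ES a b) →
        ∀ a b : STA I, STA.tilde EU a b → ES a b := by
  intro S hS hex
  obtain ⟨E₀, hE₀m, hE₀sub, hE₀σ⟩ := hex
  have hGF : ∀ z ∈ S₀, STA.GhostFree EU z := by
    intro z hz
    rw [hS₀] at hz
    exact (STA.ghostFree_congr hEU hz).mpr hz₀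
  have hSmem : ∀ z ∈ S₀, (z ∈ S ↔ ∀ b, E₀ z b → b = z) := by
    intro z hz
    rw [← hE₀σ, hσ]
    simp [Set.mem_setOf_eq, Set.mem_sep_iff, hz]
  set R : STA I → STA I → Prop := fun a b => ∃ E : STA I → STA I → Prop,
    STA.MFCE E ∧ (∀ a b, E a b → EU a b) ∧ σ E = S ∧ E a b with hR
  have hRrefl : ∀ a, R a a := fun a => ⟨E₀, hE₀m, hE₀sub, hE₀σ, hE₀m.1.refl a⟩
  have hRsymm : ∀ a b, R a b → R b a := by
    rintro a b ⟨E, h1, h2, h3, h4⟩; exact ⟨E, h1, h2, h3, h1.1.symm h4⟩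
  have hRmult : STA.Mult R := by
    rintro a b d ⟨E, h1, h2, h3, h4⟩; exact ⟨E, h1, h2, h3, h1.2.1 a b d h4⟩
  have hRnu : ∀ a b, R a b → STA.nu a = STA.nu b := by
    rintro a b ⟨E, h1, _, _, h4⟩; exact h1.2.2 a b h4
  have hRsub : ∀ a b, R a b → EU a b := by
    rintro a b ⟨E, _, h2, _, h4⟩; exact h2 a b h4
  have hTGsub : ∀ a b, Relation.TransGen R a b → EU a b := by
    intro a b h
    induction h with
    | single h => exact hRsub _ _ h
    | tail _ hbc ih => exact hEU.1.trans ih (hRsub _ _ hbc)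
  have hTGσ : σ (Relation.TransGen R) = S := by
    rw [hσ]; ext z
    simp only [Set.mem_setOf_eq, Set.mem_sep_iff]
    constructor
    · rintro ⟨hz0, hsing⟩
      rw [hSmem z hz0]
      intro b hb
      exact hsing b (.single ⟨E₀, hE₀m, hE₀sub, hE₀σ, hb⟩)
    · intro hzS
      have hz0 := hS hzS
      refine ⟨hz0, fun b hb => STA.transGen_singleton ?_ b hb⟩
      rintro b ⟨E, h1, h2, h3, h4⟩
      have hmem : z ∈ σ E := h3.symm ▸ hzS
      rw [hσ] at hmem
      exact hmem.2 b h4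
  constructor
  · refine ⟨Relation.TransGen R, STA.transGen_mfce hRrefl hRsymm hRmult hRnu,
      hTGsub, hTGσ, ?_⟩
    intro E h1 h2 h3 a b hab
    exact .single ⟨E, h1, h2, h3, hab⟩
  · rintro ES ⟨hESm, hESsub, hESσ, hESgr⟩ a b hab
    set R' : STA I → STA I → Prop := fun a b => E₀ a b ∨ STA.tilde EU a b with hR'
    have htm := STA.tilde_mfce hEU
    have hR'refl : ∀ a, R' a a := fun a => Or.inl (hE₀m.1.refl a)
    have hR'symm : ∀ a b, R' a b → R' b a := by
      rintro a b (h | h)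
      · exact Or.inl (hE₀m.1.symm h)
      · exact Or.inr (htm.1.symm h)
    have hR'mult : STA.Mult R' := by
      rintro a b d (h | h)
      · exact Or.inl (hE₀m.2.1 a b d h)
      · exact Or.inr (htm.2.1 a b d h)
    have hR'nu : ∀ a b, R' a b → STA.nu a = STA.nu b := by
      rintro a b (h | h)
      · exact hE₀m.2.2 a b h
      · exact htm.2.2 a b h
    have hR'sub : ∀ a b, R' a b → EU a b := by
      rintro a b (h | h)
      · exact hE₀sub a b h
      · rcases h with rfl | ⟨h, _⟩
        · exact hEU.1.refl a
        · exact h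
    have hTG'sub : ∀ a b, Relation.TransGen R' a b → EU a b := by
      intro a b h
      induction h with
      | single h => exact hR'sub _ _ h
      | tail _ hbc ih => exact hEU.1.trans ih (hR'sub _ _ hbc)
    have hTG'σ : σ (Relation.TransGen R') = S := by
      rw [hσ]; ext z
      simp only [Set.mem_setOf_eq, Set.mem_sep_iff]
      constructor
      · rintro ⟨hz0, hsing⟩
        rw [hSmem z hz0]
        intro b hb
        exact hsing b (.single (Or.inl hb))
      · intro hzS
        have hz0 := hS hzS
        refine ⟨hz0, fun b hb => STA.transGen_singleton ?_ b hb⟩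
        rintro b (hb | hb)
        · exact (hSmem z hz0).mp hzS b hb
        · rcases hb with rfl | ⟨_, hg⟩
          · rfl
          · exact absurd (hGF z hz0) hg
    exact hESgr _ (STA.transGen_mfce hR'refl hR'symm hR'mult hR'nu) hTG'sub hTG'σ a b
      (.single (Or.inr hab))
end

section
/- Let E_U be an MFCE-relation on 𝔄 = 𝔄(I), let ζ be an E_U-class containing no ghost, let S₀ be the set of monomials in ζ, and let Π = (S_j)_{j∈J} be a partition of S₀. Call an MFCE-relation E ⊆ E_U adapted to Π if no E-class of an element of S₀ contains a ghost and two elements of S₀ are E-equivalent exactly when they lie in the same member of Π. If at least one MFCE-relation E ⊆ E_U adapted to Π exists, then E_Π := ⋁_{j∈J} Eq(S_j) is adapted to Π, satisfies E_Π ⊆ E_U, and is contained in every MFCE-relation E ⊆ E_U adapted to Π; thus 𝔄/E_Π is the unique minimal partitioned splitting cover of U = 𝔄/E_U adapted to Π. -/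
/-- `E` is adapted to the partition `(Sj j)_{j : J}` of `S₀`: no `E`-class of an
element of `S₀` contains a ghost, and two elements of `S₀` are `E`-equivalent
exactly when they lie in the same member of the partition. -/
def STA.AdaptedTo {I J : Type} (S₀ : Set (STA I)) (Sj : J → Set (STA I))
    (E : STA I → STA I → Prop) : Prop :=
  (∀ z ∈ S₀, STA.GhostFree E z) ∧
  ∀ z w : STA I, z ∈ S₀ → w ∈ S₀ → (E z w ↔ ∃ j : J, z ∈ Sj j ∧ w ∈ Sj j)

/-- If the partition `Π = (S_j)` of the ghost-free `E_U`-class `S₀` admits some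
adapted MFCE-relation contained in `E_U`, then `E_Π = ⋁_j Eq(S_j)` is an
MFCE-relation contained in `E_U`, adapted to `Π`, and contained in every
MFCE-relation `E ⊆ E_U` adapted to `Π`; thus `𝔄/E_Π` is the unique minimal
partitioned splitting cover of `U = 𝔄/E_U` adapted to `Π`. -/
theorem stmt14 {I J : Type} (EU : STA I → STA I → Prop) (hEU : STA.MFCE EU)
    (z₀ : STA I) (hz₀ : STA.GhostFree EU z₀)
    (S₀ : Set (STA I)) (hS₀ : S₀ = {a : STA I | EU a z₀})
    (Sj : J → Set (STA I))
    (hne : ∀ j : J, (Sj j).Nonempty)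
    (hunion : (⋃ j : J, Sj j) = S₀)
    (hdisj : ∀ j k : J, j ≠ k → Disjoint (Sj j) (Sj k))
    (EPi : STA I → STA I → Prop)
    (hEPi : EPi = STA.mgen (fun a b : STA I => ∃ j : J, a ∈ Sj j ∧ b ∈ Sj j))
    (hex : ∃ E : STA I → STA I → Prop,
      STA.MFCE E ∧ (∀ a b : STA I, E a b → EU a b) ∧ STA.AdaptedTo S₀ Sj E) :
    STA.MFCE EPi ∧ (∀ a b : STA I, EPi a b → EU a b) ∧ STA.AdaptedTo S₀ Sj EPi ∧
    ∀ E : STA I → STA I → Prop, STA.MFCE E → (∀ a b : STA I, E a b → EU a b) →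
      STA.AdaptedTo S₀ Sj E → ∀ a b : STA I, EPi a b → E a b := by
  subst hEPi
  set R : STA I → STA I → Prop := fun a b => ∃ j : J, a ∈ Sj j ∧ b ∈ Sj j with hR
  have hmem : ∀ {a : STA I} {j : J}, a ∈ Sj j → a ∈ S₀ := by
    intro a j ha
    have : a ∈ ⋃ j, Sj j := Set.mem_iUnion.mpr ⟨j, ha⟩
    rwa [hunion] at this
  -- any MFCE relation ≤ EU adapted to the partition contains R, hence mgen R
  have hcontain : ∀ E : STA I → STA I → Prop, STA.MFCE E →
      STA.AdaptedTo S₀ Sj E → ∀ a b : STA I, STA.mgen R a b → E a b := by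
    intro E hE hA a b h
    refine h E hE.1 hE.2.1 ?_
    rintro x y ⟨j, hx, hy⟩
    exact (hA.2 x y (hmem hx) (hmem hy)).mpr ⟨j, hx, hy⟩
  obtain ⟨E₀, hE₀M, hE₀U, hE₀A⟩ := hex
  have hsub : ∀ a b : STA I, STA.mgen R a b → E₀ a b := hcontain E₀ hE₀M hE₀A
  have hequiv : Equivalence (STA.mgen R) := by
    constructor
    · intro a E hEq _ _; exact hEq.refl a
    · intro a b h E hEq hM hRE; exact hEq.symm (h E hEq hM hRE)
    · intro a b c h1 h2 E hEq hM hRE; exact hEq.trans (h1 E hEq hM hRE) (h2 E hEq hM hRE)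
  have hmult : STA.Mult (STA.mgen R) := by
    intro a b d h E hEq hM hRE; exact hM a b d (h E hEq hM hRE)
  refine ⟨⟨hequiv, hmult, fun a b h => hE₀M.2.2 a b (hsub a b h)⟩,
    fun a b h => hE₀U a b (hsub a b h), ⟨?_, ?_⟩, fun E hE hEsub hA => hcontain E hE hA⟩
  · intro z hz ⟨g, hg, hzg⟩
    exact hE₀A.1 z hz ⟨g, hg, hsub z g hzg⟩
  · intro z w hz hw
    constructor
    · intro h; exact (hE₀A.2 z w hz hw).mp (hsub z w h)
    · intro h E _ _ hRE; exact hRE z w h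
end

section
/- Let E_U be an MFCE-relation on 𝔄 = 𝔄(I), let ζ be an E_U-class containing no ghost, and let S₀ be the set of monomials in ζ. Let Π₁ = (S′_j) and Π₂ = (S″_k) be partitions of S₀, each admitting at least one adapted MFCE-relation contained in E_U, and let E_{Π₁} := ⋁_j Eq(S′_j) and E_{Π₂} := ⋁_k Eq(S″_k) be the corresponding least adapted MFCE-relations. Then Π₂ is a refinement of Π₁ if and only if E_{Π₂} ⊆ E_{Π₁}. Hence the map Π ↦ E_Π is an isomorphism of partially ordered sets from the set of partitions of S₀ admitting adapted relations (ordered by refinement) onto the set of least adapted MFCE-relations (ordered by reverse inclusion), equivalently onto the set of minimal partitioned splitting covers of U = 𝔄/E_U for ζ. -/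
/-- Let `Π₁ = (S1 j)` and `Π₂ = (S2 k)` be partitions of the ghost-free
`E_U`-class `S₀`, each admitting an adapted MFCE-relation contained in `E_U`, and
let `E_{Π₁} = ⋁_j Eq(S1 j)` and `E_{Π₂} = ⋁_k Eq(S2 k)` be the corresponding least
adapted MFCE-relations.  Then `Π₂` refines `Π₁` iff `E_{Π₂} ⊆ E_{Π₁}`; hence
`Π ↦ E_Π` is an isomorphism of posets onto the minimal partitioned splitting
covers. -/
theorem stmt16 {I J₁ J₂ : Type} (EU : STA I → STA I → Prop) (hEU : STA.MFCE EU)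
    (z₀ : STA I) (hz₀ : STA.GhostFree EU z₀)
    (S₀ : Set (STA I)) (hS₀ : S₀ = {a : STA I | EU a z₀})
    (S1 : J₁ → Set (STA I))
    (hne1 : ∀ j : J₁, (S1 j).Nonempty)
    (hunion1 : (⋃ j : J₁, S1 j) = S₀)
    (hdisj1 : ∀ j k : J₁, j ≠ k → Disjoint (S1 j) (S1 k))
    (S2 : J₂ → Set (STA I))
    (hne2 : ∀ j : J₂, (S2 j).Nonempty)
    (hunion2 : (⋃ j : J₂, S2 j) = S₀)
    (hdisj2 : ∀ j k : J₂, j ≠ k → Disjoint (S2 j) (S2 k))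
    (hex1 : ∃ E : STA I → STA I → Prop,
      STA.MFCE E ∧ (∀ a b : STA I, E a b → EU a b) ∧ STA.AdaptedTo S₀ S1 E)
    (hex2 : ∃ E : STA I → STA I → Prop,
      STA.MFCE E ∧ (∀ a b : STA I, E a b → EU a b) ∧ STA.AdaptedTo S₀ S2 E)
    (EPi1 EPi2 : STA I → STA I → Prop)
    (hEPi1 : EPi1 = STA.mgen (fun a b : STA I => ∃ j : J₁, a ∈ S1 j ∧ b ∈ S1 j))
    (hEPi2 : EPi2 = STA.mgen (fun a b : STA I => ∃ k : J₂, a ∈ S2 k ∧ b ∈ S2 k)) :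
    (∀ k : J₂, ∃ j : J₁, S2 k ⊆ S1 j) ↔ (∀ a b : STA I, EPi2 a b → EPi1 a b) := by
  subst hEPi1 hEPi2
  have hS1sub : ∀ j : J₁, S1 j ⊆ S₀ := fun j => hunion1 ▸ Set.subset_iUnion S1 j
  have hS2sub : ∀ k : J₂, S2 k ⊆ S₀ := fun k => hunion2 ▸ Set.subset_iUnion S2 k
  constructor
  · intro href a b hab E hE hM hR
    refine hab E hE hM ?_
    rintro x y ⟨k, hx, hy⟩
    obtain ⟨j, hsub⟩ := href k
    exact hR x y ⟨j, hsub hx, hsub hy⟩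
  · intro hle k
    obtain ⟨z, hz⟩ := hne2 k
    have hzS0 : z ∈ S₀ := hS2sub k hz
    have hzU : z ∈ ⋃ j : J₁, S1 j := hunion1.symm ▸ hzS0
    obtain ⟨j, hzj⟩ := Set.mem_iUnion.mp hzU
    refine ⟨j, fun w hw => ?_⟩
    have hwS0 : w ∈ S₀ := hS2sub k hw
    have h2 : STA.mgen (fun a b : STA I => ∃ k : J₂, a ∈ S2 k ∧ b ∈ S2 k) z w :=
      fun E hE hM hR => hR z w ⟨k, hz, hw⟩
    have h1 := hle z w h2
    obtain ⟨E, hMF, hsub, hAd⟩ := hex1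
    have hEzw : E z w := by
      refine h1 E hMF.1 hMF.2.1 ?_
      rintro x y ⟨j', hx, hy⟩
      exact (hAd.2 x y (hS1sub j' hx) (hS1sub j' hy)).mpr ⟨j', hx, hy⟩
    obtain ⟨j', hzj', hwj'⟩ := (hAd.2 z w hzS0 hwS0).mp hEzw
    have : j' = j := by
      by_contra h
      exact Set.disjoint_left.mp (hdisj1 j' j h) hzj' hzj
    exact this ▸ hwj'
end

section
/- Let E_W be an MFCE-relation on 𝔄 = 𝔄(I) such that distinct variables with tangible classes have distinct classes (for i ≠ j, if the E_W-classes of x_i and x_j both contain no ghost, then these classes are distinct). Then the following are equivalent: (i) the set of E_W-classes containing no ghost is finite; (ii) there exists a monomial w : I →₀ ℕ such that (x_i^{w(i)+1}, c^{w(i)+1}) ∈ E_W for every i ∈ I, i.e. ⋁_{i∈I} Eq(x_i^{w(i)+1}, c^{w(i)+1}) ⊆ E_W, so that 𝔄/E_W is a fiber contraction over M of the tangibly finite monoid A_w := 𝔄/⋁_i Eq(x_i^{w(i)+1}, c^{w(i)+1}). -/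
namespace STA

variable {I : Type}

lemma deg_single (i : I) (n : ℕ) : deg (Finsupp.single i n) = n :=
  Finsupp.sum_single_index rfl

lemma tang_mul_tang (z w : I →₀ ℕ) : mul (tang z) (tang w) = tang (z + w) := rfl

lemma gh_mul_tang (k : ℕ) (w : I →₀ ℕ) : mul (gh k) (tang w) = gh (k + deg w) := rfl

lemma nu_tang (z : I →₀ ℕ) : nu (tang z) = gh (deg z) := by
  simp [nu, gh_mul_tang]

lemma nu_gh (k : ℕ) : nu (gh k : STA I) = gh k := by simp [nu, mul]

/-- If the class of a monomial contains a ghost, it contains `c^(deg z)`. -/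
lemma ghost_rel {EW : STA I → STA I → Prop} (hEW : MFCE EW) {z : I →₀ ℕ}
    (h : ∃ g : STA I, isGhost g ∧ EW (tang z) g) : EW (tang z) (gh (deg z)) := by
  obtain ⟨g, hg, hzg⟩ := h
  have hn := hEW.2.2 _ _ hzg
  cases g with
  | tang _ => exact absurd hg (by simp [isGhost])
  | gh k =>
      rw [nu_tang, nu_gh] at hn
      obtain rfl : deg z = k := by injection hn
      exact hzg
  | zero =>
      rw [nu_tang] at hn
      exact absurd hn (by simp [nu, mul])

end STA

/-- Let `E_W` be an MFCE-relation on `𝔄(I)` such that distinct variables with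
ghost-free classes have distinct classes.  Then the set of ghost-free
`E_W`-classes is finite (i.e. there is a finite set of representatives) iff there
is a monomial `w` with `⋁_i Eq(x_i^{w i + 1}, c^{w i + 1}) ⊆ E_W`, so that
`𝔄/E_W` is a fiber contraction over `M` of the tangibly finite monoid `A_w`. -/
theorem stmt19 {I : Type} (EW : STA I → STA I → Prop) (hEW : STA.MFCE EW)
    (hdistinct : ∀ i j : I, i ≠ j →
      STA.GhostFree EW (STA.tang (Finsupp.single i 1)) →
      STA.GhostFree EW (STA.tang (Finsupp.single j 1)) →
      ¬ EW (STA.tang (Finsupp.single i 1)) (STA.tang (Finsupp.single j 1))) :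
    (∃ F : Finset (STA I), ∀ a : STA I, STA.GhostFree EW a → ∃ b ∈ F, EW a b) ↔
    (∃ w : I →₀ ℕ, ∀ a b : STA I,
      STA.mgen (fun x y : STA I => ∃ i : I,
        x = STA.tang (Finsupp.single i (w i + 1)) ∧ y = STA.gh (w i + 1)) a b →
      EW a b) := by
  classical
  obtain ⟨hequiv, hmult, hfib⟩ := hEW
  have hEW' : STA.MFCE EW := ⟨hequiv, hmult, hfib⟩
  constructor
  · rintro ⟨F, hF⟩
    -- For every variable, some power is related to a ghost.
    have key : ∀ i : I, ∃ n : ℕ, EW (STA.tang (Finsupp.single i n)) (STA.gh n) := by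
      intro i
      by_contra hnot
      push_neg at hnot
      have hgf : ∀ n : ℕ, STA.GhostFree EW (STA.tang (Finsupp.single i n)) := by
        intro n hex
        have := STA.ghost_rel hEW' hex
        rw [STA.deg_single] at this
        exact hnot n this
      choose b hb1 hb2 using fun n => hF _ (hgf n)
      obtain ⟨m, n, hmn, hbmn⟩ := Finite.exists_ne_map_eq_of_infinite
        (fun n : ℕ => (⟨b n, hb1 n⟩ : {x // x ∈ F}))
      have hbmn' : b m = b n := congrArg Subtype.val hbmn
      have hEmn : EW (STA.tang (Finsupp.single i m)) (STA.tang (Finsupp.single i n)) :=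
        hequiv.trans (hb2 m) (hbmn' ▸ hequiv.symm (hb2 n))
      have := hfib _ _ hEmn
      rw [STA.nu_tang, STA.nu_tang, STA.deg_single, STA.deg_single] at this
      exact hmn (by injection this)
    -- The set of variables with ghost-free class is finite.
    have hTfin : {i : I | STA.GhostFree EW (STA.tang (Finsupp.single i 1))}.Finite := by
      by_contra hinf
      haveI := Set.Infinite.to_subtype hinf
      choose b hb1 hb2 using
        fun i : {i : I | STA.GhostFree EW (STA.tang (Finsupp.single i 1))} => hF _ i.2
      obtain ⟨x, y, hxy, hbxy⟩ := Finite.exists_ne_map_eq_of_infinite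
        (fun i => (⟨b i, hb1 i⟩ : {a // a ∈ F}))
      have hbxy' : b x = b y := congrArg Subtype.val hbxy
      have hExy : EW (STA.tang (Finsupp.single (x : I) 1)) (STA.tang (Finsupp.single (y : I) 1)) :=
        hequiv.trans (hb2 x) (hbxy' ▸ hequiv.symm (hb2 y))
      exact hdistinct x y (fun h => hxy (Subtype.ext h)) x.2 y.2 hExy
    set f : I → ℕ := fun i =>
      if STA.GhostFree EW (STA.tang (Finsupp.single i 1)) then Classical.choose (key i) else 0
      with hf
    refine ⟨Finsupp.onFinset hTfin.toFinset f ?_, ?_⟩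
    · intro i hi
      rw [Set.Finite.mem_toFinset]
      by_contra hmem
      exact hi (if_neg (by simpa using hmem))
    · intro a b hab
      refine hab EW hequiv hmult ?_
      rintro x y ⟨i, rfl, rfl⟩
      simp only [Finsupp.onFinset_apply]
      by_cases hi : STA.GhostFree EW (STA.tang (Finsupp.single i 1))
      · have hspec := Classical.choose_spec (key i)
        have hfi : f i = Classical.choose (key i) := by simp [hf, hi]
        rw [hfi]
        have := hmult _ _ (STA.tang (Finsupp.single i 1)) hspec
        rw [STA.tang_mul_tang, STA.gh_mul_tang, STA.deg_single, ← Finsupp.single_add] at this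
        exact this
      · have hfi : f i = 0 := by simp [hf, hi]
        rw [hfi]
        rw [STA.GhostFree, not_not] at hi
        have := STA.ghost_rel hEW' hi
        rw [STA.deg_single] at this
        exact this
  · rintro ⟨w, hw⟩
    have hbase : ∀ i : I, EW (STA.tang (Finsupp.single i (w i + 1))) (STA.gh (w i + 1)) :=
      fun i => hw _ _ (fun E _ _ hR => hR _ _ ⟨i, rfl, rfl⟩)
    have hfin : (Set.Iic w).Finite := Set.finite_Iic w
    refine ⟨(hfin.image STA.tang).toFinset, ?_⟩
    intro a ha
    cases a with
    | gh k => exact absurd ⟨STA.gh k, trivial, hequiv.refl _⟩ ha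
    | zero => exact absurd ⟨STA.zero, trivial, hequiv.refl _⟩ ha
    | tang z =>
      refine ⟨STA.tang z, ?_, hequiv.refl _⟩
      rw [Set.Finite.mem_toFinset]
      refine ⟨z, ?_, rfl⟩
      rw [Set.mem_Iic]
      by_contra hle
      rw [Finsupp.le_def] at hle
      push_neg at hle
      obtain ⟨j, hj⟩ := hle
      have hj' : w j + 1 ≤ z j := hj
      have hsle : Finsupp.single j (w j + 1) ≤ z := Finsupp.single_le_iff.mpr hj'
      have hz : Finsupp.single j (w j + 1) + (z - Finsupp.single j (w j + 1)) = z :=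
        add_tsub_cancel_of_le hsle
      have hmul := hmult _ _ (STA.tang (z - Finsupp.single j (w j + 1))) (hbase j)
      rw [STA.tang_mul_tang, STA.gh_mul_tang, hz] at hmul
      exact ha ⟨STA.gh _, trivial, hmul⟩
end
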